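/- Let G be a digraph with inner vertices V_I and suppose G contains no I-cycle (no directed cycle containing exactly one inner vertex). Define V_OC ⊆ V \ V_I with the property that for all u, v ∈ V_OC there is a directed path from u to v within V_OC. Define V_I^out (resp. V_I^in) as inner vertices having a path to (resp. from) some vertex of V_OC avoiding other inner vertices. Then every I-path between two vertices of V_I^out avoids V_OC, and every I-path between two vertices of V_I^in avoids V_OC. -/

import Mathlib

/-!
If an I-path from `u` to `v` passed through `x ∈ V_OC`, its part up to `x` would witness
`u ∈ V_I^out` and its part from `x` would witness `v ∈ V_I^in` (all its internal vertices are
non-inner). So one endpoint would lie in `V_I^out ∩ V_I^in`. But a vertex `k` in both closes,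
through a path inside `V_OC`, a closed walk whose only inner vertex is `k`; shortcutting repeated
vertices turns it into a cycle through `k`, an I-cycle.
-/

/-- A directed walk from `a` to `b` along relation `A`. -/
def IsWalkFrom {V : Type*} (A : V → V → Prop) (w : List V) (a b : V) : Prop :=
  w ≠ [] ∧ w.Chain' A ∧ w.head? = some a ∧ w.getLast? = some b

/-- A directed path (distinct vertices) from `a` to `b` in the digraph `E`. -/
def IsPathFrom {V : Type*} (E : V → V → Prop) (w : List V) (a b : V) : Prop :=
  w.Nodup ∧ IsWalkFrom E w a b

/-- A directed cycle: a nonempty list of distinct vertices with arcs between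
consecutive vertices and from the last back to the first. -/
def IsCycle {V : Type*} (E : V → V → Prop) : List V → Prop
  | [] => False
  | v :: l => (v :: l).Nodup ∧ List.Chain E v (l ++ [v])

/-- Internal vertices of a walk (all but the first and the last). -/
def internals {V : Type*} (w : List V) : List V := (w.drop 1).dropLast

/-- `arcOf c a b` : `(a, b)` is an arc of the cycle given by the list `c`. -/
def arcOf {V : Type*} (c : List V) (a b : V) : Prop :=
  [a, b] <:+: c ∨ (c.getLast? = some a ∧ c.head? = some b)

/-- An I-path from `a` to `b`: a directed path between distinct inner vertices all of
whose internal vertices are non-inner. -/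
def IsIPath {V : Type*} (E : V → V → Prop) (VI : Set V) (p : List V) (a b : V) : Prop :=
  IsPathFrom E p a b ∧ a ∈ VI ∧ b ∈ VI ∧ a ≠ b ∧ ∀ x ∈ internals p, x ∉ VI

namespace List

theorem exists_eq_append_cons_append_cons_of_not_nodup {α : Type*} {l : List α}
    (h : ¬ l.Nodup) : ∃ s x m t, l = s ++ x :: (m ++ x :: t) := by
  obtain ⟨x, hxx⟩ : ∃ x, [x, x] <+ l := by simpa [nodup_iff_sublist] using h
  obtain ⟨r₁, r₂, rfl, hx₁, hx₂⟩ := cons_sublist_iff.mp hxx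
  obtain ⟨s, m, rfl⟩ := append_of_mem hx₁
  obtain ⟨m', t, rfl⟩ := append_of_mem (singleton_sublist.mp hx₂)
  exact ⟨s, x, m ++ m', t, by simp⟩

end List

section Walks

variable {V : Type*} {E : V → V → Prop}

namespace IsWalkFrom

theorem eq_or_mem_drop_one {w : List V} {a b y : V} (h : IsWalkFrom E w a b) (hy : y ∈ w) :
    y = a ∨ y ∈ w.drop 1 := by
  obtain ⟨t, rfl⟩ := List.head?_eq_some_iff.mp h.2.2.1
  simpa using hy

theorem mem_dropLast_or_eq {w : List V} {a b y : V} (h : IsWalkFrom E w a b) (hy : y ∈ w) :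
    y ∈ w.dropLast ∨ y = b := by
  obtain ⟨s, rfl⟩ := List.getLast?_eq_some_iff.mp h.2.2.2
  simpa using hy

theorem two_le_length {w : List V} {a b : V} (h : IsWalkFrom E w a b) (hab : a ≠ b) :
    2 ≤ w.length := by
  obtain ⟨t, rfl⟩ := List.head?_eq_some_iff.mp h.2.2.1
  rcases t with _ | ⟨z, t⟩
  · exact absurd (by simpa using h.2.2.2) hab
  · simp

theorem append {w₁ w₂ : List V} {a b c : V} (h₁ : IsWalkFrom E w₁ a b)
    (h₂ : IsWalkFrom E w₂ b c) : IsWalkFrom E (w₁ ++ w₂.tail) a c := by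
  obtain ⟨s, rfl⟩ := List.getLast?_eq_some_iff.mp h₁.2.2.2
  obtain ⟨t, rfl⟩ := List.head?_eq_some_iff.mp h₂.2.2.1
  refine ⟨by simp, ?_, ?_, ?_⟩
  · exact h₁.2.1.append_overlap (l₃ := t) h₂.2.1 (List.cons_ne_nil b [])
  · simpa using h₁.2.2.1
  · cases t with
    | nil => simpa using h₂.2.2.2
    | cons z t => simpa using h₂.2.2.2

theorem shortcut {s m t : List V} {x a b : V} (h : IsWalkFrom E (s ++ x :: (m ++ x :: t)) a b) :
    IsWalkFrom E (s ++ x :: t) a b := by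
  obtain ⟨-, hch, hhead, hlast⟩ := h
  refine ⟨by simp, ?_, ?_, ?_⟩
  · have hleft : (s ++ [x]).IsChain E := hch.prefix ⟨m ++ x :: t, by simp⟩
    have hright : ([x] ++ t).IsChain E := hch.suffix ⟨s ++ x :: m, by simp⟩
    show List.IsChain E _
    simpa using hleft.append_overlap hright (List.cons_ne_nil x [])
  · simpa [List.head?_append] using hhead
  · simpa [List.getLast?_append, List.getLast?_cons] using hlast

theorem exists_isPathFrom_subset {w : List V} {a b : V} (h : IsWalkFrom E w a b) :
    ∃ p, IsPathFrom E p a b ∧ p ⊆ w := by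
  by_cases hnd : w.Nodup
  · exact ⟨w, ⟨hnd, h⟩, List.Subset.refl w⟩
  obtain ⟨s, x, m, t, hw⟩ := List.exists_eq_append_cons_append_cons_of_not_nodup hnd
  obtain ⟨p, hp, hsub⟩ := (hw ▸ h).shortcut.exists_isPathFrom_subset
  exact ⟨p, hp, fun y hy => by have := hsub hy; simp [hw] at this ⊢; tauto⟩
termination_by w.length
decreasing_by simp [hw]

end IsWalkFrom

theorem IsPathFrom.append_cons_left {s t : List V} {x a b : V}
    (h : IsPathFrom E (s ++ x :: t) a b) : IsPathFrom E (s ++ [x]) a x := by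
  obtain ⟨hnd, -, hch, hhead, -⟩ := h
  refine ⟨hnd.sublist (by simp), by simp, hch.prefix ⟨t, by simp⟩, ?_, by simp⟩
  simpa [List.head?_append] using hhead

theorem IsPathFrom.append_cons_right {s t : List V} {x a b : V}
    (h : IsPathFrom E (s ++ x :: t) a b) : IsPathFrom E (x :: t) x b := by
  obtain ⟨hnd, -, hch, -, hlast⟩ := h
  refine ⟨hnd.sublist (by simp), by simp, hch.suffix ⟨s, rfl⟩, by simp, ?_⟩
  simpa [List.getLast?_append] using hlast

theorem IsWalkFrom.exists_isCycle {w : List V} {a : V} (h : IsWalkFrom E w a a)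
    (hw : 2 ≤ w.length) : ∃ c, IsCycle E c ∧ a ∈ c ∧ c ⊆ w := by
  obtain ⟨_ | ⟨z, t⟩, rfl⟩ := List.head?_eq_some_iff.mp h.2.2.1
  · simp at hw
  have hza : E a z := (List.isChain_cons_cons.mp h.2.1).1
  have htail : IsWalkFrom E (z :: t) z a :=
    ⟨by simp, h.2.1.tail, rfl, by simpa using h.2.2.2⟩
  obtain ⟨p, ⟨hnd, hwalk⟩, hsub⟩ := htail.exists_isPathFrom_subset
  obtain ⟨q, rfl⟩ := List.getLast?_eq_some_iff.mp hwalk.2.2.2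
  refine ⟨a :: q, ⟨?_, ?_⟩, by simp, ?_⟩
  · exact (List.perm_append_singleton a q).nodup_iff.mp hnd
  · obtain ⟨r, hr⟩ := List.head?_eq_some_iff.mp hwalk.2.2.1
    show (a :: (q ++ [a])).IsChain E
    rw [hr]
    exact List.isChain_cons_cons.mpr ⟨hza, hr ▸ hwalk.2.1⟩
  · intro y hy
    rcases List.mem_cons.mp hy with rfl | hy
    · simp
    · exact List.mem_cons_of_mem _ (hsub (by simp [hy]))

end Walks

theorem internals_append_cons {α : Type*} {s t : List α} {x : α} (hs : s ≠ []) (ht : t ≠ []) :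
    internals (s ++ x :: t) = s.drop 1 ++ x :: t.dropLast := by
  rw [internals, List.drop_append_of_le_length (List.length_pos_iff.mpr hs),
    List.dropLast_append_of_ne_nil (List.cons_ne_nil _ _), List.dropLast_cons_of_ne_nil ht]

section InnerVertices

variable {V : Type*} {E : V → V → Prop} {VI : Set V}

theorem IsIPath.exists_split {p : List V} {u v x : V} (hp : IsIPath E VI p u v) (hx : x ∈ p)
    (hxI : x ∉ VI) :
    (∃ w, IsPathFrom E w u x ∧ ∀ y ∈ w.drop 1, y ∉ VI) ∧
      (∃ w, IsPathFrom E w x v ∧ ∀ y ∈ w.dropLast, y ∉ VI) := by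
  obtain ⟨hpath, hu, hv, -, hint⟩ := hp
  obtain ⟨s, t, rfl⟩ := List.append_of_mem hx
  have hs : s ≠ [] := by
    rintro rfl
    obtain rfl : x = u := by simpa using hpath.2.2.2.1
    exact hxI hu
  have ht : t ≠ [] := by
    rintro rfl
    obtain rfl : x = v := by simpa using hpath.2.2.2.2
    exact hxI hv
  rw [internals_append_cons hs ht] at hint
  refine ⟨⟨s ++ [x], hpath.append_cons_left, fun y hy => hint y ?_⟩,
    ⟨x :: t, hpath.append_cons_right, fun y hy => hint y ?_⟩⟩
  · rw [List.drop_append_of_le_length (List.length_pos_iff.mpr hs)] at hy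
    simp only [List.mem_append, List.mem_cons] at hy ⊢
    tauto
  · rw [List.dropLast_cons_of_ne_nil ht] at hy
    simp only [List.mem_append, List.mem_cons] at hy ⊢
    tauto

theorem exists_iCycle_of_isWalkFrom {W : List V} {k : V} (hW : IsWalkFrom E W k k)
    (hlen : 2 ≤ W.length) (hk : k ∈ VI) (hinner : ∀ y ∈ W, y ∈ VI → y = k) :
    ∃ c, IsCycle E c ∧ ∃! x, x ∈ c ∧ x ∈ VI := by
  obtain ⟨c, hc, hkc, hsub⟩ := hW.exists_isCycle hlen
  exact ⟨c, hc, k, ⟨hkc, hk⟩, fun y hy => hinner y (hsub hy.1) hy.2⟩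

theorem false_of_reaches_of_reachedFrom {VOC : Set V} (hVOC : ∀ x ∈ VOC, x ∉ VI)
    (hconn : ∀ u ∈ VOC, ∀ v ∈ VOC, ∃ w : List V, IsPathFrom E w u v ∧ ∀ x ∈ w, x ∈ VOC)
    (hnoIcycle : ¬ ∃ c : List V, IsCycle E c ∧ ∃! x, x ∈ c ∧ x ∈ VI) {k : V} (hk : k ∈ VI)
    (hout : ∃ w j, j ∈ VOC ∧ IsPathFrom E w k j ∧ ∀ x ∈ w.drop 1, x ∉ VI)
    (hin : ∃ w j, j ∈ VOC ∧ IsPathFrom E w j k ∧ ∀ x ∈ w.dropLast, x ∉ VI) : False := by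
  obtain ⟨w₁, j₁, hj₁, hp₁, hout₁⟩ := hout
  obtain ⟨w₂, j₂, hj₂, hp₂, hin₂⟩ := hin
  obtain ⟨w₃, hp₃, hw₃⟩ := hconn j₁ hj₁ j₂ hj₂
  have hW := (hp₁.2.append hp₃.2).append hp₂.2
  have hlen : 2 ≤ (w₁ ++ w₃.tail ++ w₂.tail).length := by
    have := hp₁.2.two_le_length fun h => hVOC j₁ hj₁ (h ▸ hk)
    simp only [List.length_append]
    omega
  refine hnoIcycle (exists_iCycle_of_isWalkFrom hW hlen hk fun y hy hyI => ?_)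
  rcases List.mem_append.mp hy with hy | hy
  · rcases List.mem_append.mp hy with hy | hy
    · exact (hp₁.2.eq_or_mem_drop_one hy).resolve_right fun h => hout₁ y h hyI
    · exact absurd hyI (hVOC y (hw₃ y (List.mem_of_mem_tail hy)))
  · exact (hp₂.2.mem_dropLast_or_eq (List.mem_of_mem_tail hy)).resolve_left
      fun h => hin₂ y h hyI

end InnerVertices

/-- in a digraph with no I-cycle, every I-path between two vertices of
`V_I^out` avoids `V_OC`, and every I-path between two vertices of `V_I^in` avoids
`V_OC`. -/
theorem ipath_avoids_voc {V : Type*} (E : V → V → Prop) (VI VOC : Set V)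
    (hVOCnoninner : ∀ x ∈ VOC, x ∉ VI)
    (hconn : ∀ u ∈ VOC, ∀ v ∈ VOC,
      ∃ w : List V, IsPathFrom E w u v ∧ ∀ x ∈ w, x ∈ VOC)
    (hnoIcycle : ¬ ∃ c : List V, IsCycle E c ∧ ∃! x, x ∈ c ∧ x ∈ VI)
    (Vout Vin : Set V)
    (hVout : Vout = {k | k ∈ VI ∧ ∃ (w : List V) (jv : V), jv ∈ VOC ∧
      IsPathFrom E w k jv ∧ ∀ x ∈ w.drop 1, x ∉ VI})
    (hVin : Vin = {k | k ∈ VI ∧ ∃ (w : List V) (jv : V), jv ∈ VOC ∧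
      IsPathFrom E w jv k ∧ ∀ x ∈ w.dropLast, x ∉ VI}) :
    (∀ u ∈ Vout, ∀ v ∈ Vout, ∀ p : List V, IsIPath E VI p u v →
      ∀ x ∈ p, x ∉ VOC) ∧
    (∀ u ∈ Vin, ∀ v ∈ Vin, ∀ p : List V, IsIPath E VI p u v →
      ∀ x ∈ p, x ∉ VOC) := by
  subst hVout hVin
  constructor
  · rintro u - v ⟨hv, hvout⟩ p hp x hx hxOC
    obtain ⟨-, w, hw, hwI⟩ := hp.exists_split hx (hVOCnoninner x hxOC)
    exact false_of_reaches_of_reachedFrom hVOCnoninner hconn hnoIcycle hv hvout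
      ⟨w, x, hxOC, hw, hwI⟩
  · rintro u ⟨hu, huin⟩ v - p hp x hx hxOC
    obtain ⟨⟨w, hw, hwI⟩, -⟩ := hp.exists_split hx (hVOCnoninner x hxOC)
    exact false_of_reaches_of_reachedFrom hVOCnoninner hconn hnoIcycle hu
      ⟨w, x, hxOC, hw, hwI⟩ huin
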